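/- arXiv:2401.12653 — 2 statements merged into one kernel-verified Lean document; each statement's English description precedes it below -/
import Mathlib

section
/- Let I_A and I_B be two MatP instances on the same bipartite graph G = (W ∪ F, E) that differ only in the preference order of a single agent x, let e = {x,y} ∈ E, and let I_H be a hybrid instance of (I_A, I_B) with respect to e. If M is a matching with e ∈ M and M is dominant for both I_A and I_B, then M is dominant for I_H. -/
open Classical

/-- An instance of matching under preferences (MatP): a bipartite graph on
workers `W` and firms `F` together with, for each agent, a strict linear order
on its neighbors (`pref x y z` means `x` strictly prefers `y` to `z`). -/
structure MatP (α : Type*) where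
  W : Finset α
  F : Finset α
  disjWF : Disjoint W F
  adj : α → α → Prop
  adj_symm : ∀ x y, adj x y → adj y x
  adj_loopless : ∀ x, ¬ adj x x
  adj_bipartite : ∀ x y, adj x y → (x ∈ W ∧ y ∈ F) ∨ (x ∈ F ∧ y ∈ W)
  pref : α → α → α → Prop
  pref_adj : ∀ x y z, pref x y z → adj x y ∧ adj x z
  pref_trans : ∀ x y z w, pref x y z → pref x z w → pref x y w
  pref_irrefl : ∀ x y, ¬ pref x y y
  pref_total : ∀ x y z, adj x y → adj x z → y ≠ z → pref x y z ∨ pref x z y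

/-- `M` is a matching of instance `I`, encoded as a symmetric partial partner
function: `M x = some y` means the edge `{x,y}` belongs to the matching. -/
def IsMatching {α : Type*} (I : MatP α) (M : α → Option α) : Prop :=
  (∀ x y, M x = some y → I.adj x y) ∧ (∀ x y, M x = some y → M y = some x)

/-- Agent `x` prefers (partner) option `o` to option `o'`:
being matched beats being unmatched, and among partners `x` uses `I.pref`. -/
def Better {α : Type*} (I : MatP α) (x : α) : Option α → Option α → Prop
  | some _, none => True
  | some y, some z => I.pref x y z
  | none, _ => False

/-- The vote of agent `x` between partner options `o` and `o'`. -/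
noncomputable def voteO {α : Type*} (I : MatP α) (x : α) (o o' : Option α) : ℤ :=
  if Better I x o o' then 1 else if Better I x o' o then -1 else 0

/-- Popularity margin `Δ^I(M,M')`: the sum of all agents' votes. -/
noncomputable def margin {α : Type*} [DecidableEq α]
    (I : MatP α) (M M' : α → Option α) : ℤ :=
  ∑ x ∈ I.W ∪ I.F, voteO I x (M x) (M' x)

/-- `M` is popular for `I`: it does not lose against any matching. -/
def Popular {α : Type*} [DecidableEq α] (I : MatP α) (M : α → Option α) : Prop :=
  ∀ M', IsMatching I M' → 0 ≤ margin I M M'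

/-- Number of matched agents: twice the number of edges of the matching. -/
noncomputable def msize {α : Type*} [Fintype α] (M : α → Option α) : ℕ :=
  (Finset.univ.filter fun x => (M x).isSome).card

/-- `M` is dominant for `I`: popular and strictly defeats every larger matching. -/
def Dominant {α : Type*} [Fintype α] [DecidableEq α]
    (I : MatP α) (M : α → Option α) : Prop :=
  Popular I M ∧ ∀ M', IsMatching I M' → msize M < msize M' → 0 < margin I M M'

/-- `IA` and `IB` are MatP instances on the same bipartite graph that differ
only in the preference order of the single agent `x`. -/
def SameExcept {α : Type*} (IA IB : MatP α) (x : α) : Prop :=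
  IA.W = IB.W ∧ IA.F = IB.F ∧ IA.adj = IB.adj ∧
  ∀ z, z ≠ x → ∀ u v, (IA.pref z u v ↔ IB.pref z u v)

/-- `IH` is a hybrid instance of `(IA, IB)` with respect to the edge `{x,y}`:
same graph, all agents other than `x` keep their `IA` preferences, and in `x`'s
preference order exactly the agents preferred to `y` in `IA` or in `IB`
are placed above `y`. -/
def IsHybrid {α : Type*} (IA IB IH : MatP α) (x y : α) : Prop :=
  IH.W = IA.W ∧ IH.F = IA.F ∧ IH.adj = IA.adj ∧
  (∀ z, z ≠ x → ∀ u v, (IH.pref z u v ↔ IA.pref z u v)) ∧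
  (∀ z, (IA.pref x z y ∨ IB.pref x z y) → IH.pref x z y) ∧
  (∀ z, IA.adj x z → z ≠ y → ¬(IA.pref x z y ∨ IB.pref x z y) → IH.pref x y z)

lemma pref_asymm {α : Type*} (I : MatP α) (x a b : α) (h : I.pref x a b) :
    ¬ I.pref x b a :=
  fun h' => I.pref_irrefl x a (I.pref_trans x a b a h h')

lemma better_iff {α : Type*} (I I' : MatP α) (z : α)
    (h : ∀ u v, I.pref z u v ↔ I'.pref z u v) (o o' : Option α) :
    Better I z o o' ↔ Better I' z o o' := by
  cases o <;> cases o' <;> simp [Better, h]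

lemma voteO_congr {α : Type*} (I I' : MatP α) (z : α)
    (h : ∀ u v, I.pref z u v ↔ I'.pref z u v) (o o' : Option α) :
    voteO I z o o' = voteO I' z o o' := by
  unfold voteO
  rw [if_congr (better_iff I I' z h o o') rfl
      (if_congr (better_iff I I' z h o' o) rfl rfl)]

/-- Lemma 2(2): if a matching containing the edge `{x,y}` is dominant for both
`IA` and `IB`, then it is dominant for the hybrid instance. -/
theorem dominant_hybrid_of_robust {α : Type*} [Fintype α] [DecidableEq α]
    (IA IB IH : MatP α) (x y : α)
    (hsame : SameExcept IA IB x)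
    (he : IA.adj x y)
    (hH : IsHybrid IA IB IH x y)
    (M : α → Option α) (hM : IsMatching IA M) (hMx : M x = some y)
    (hA : Dominant IA M) (hB : Dominant IB M) :
    Dominant IH M := by
  obtain ⟨hW, hF, hadj, hprefAB⟩ := hsame
  obtain ⟨hHW, hHF, hHadj, hHpref, h5, h6⟩ := hH
  have hmatchA : ∀ M', IsMatching IH M' → IsMatching IA M' := by
    intro M' hM'
    exact ⟨fun a b h => by rw [← hHadj]; exact hM'.1 a b h, hM'.2⟩
  have hmatchB : ∀ M', IsMatching IH M' → IsMatching IB M' := by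
    intro M' hM'
    exact ⟨fun a b h => by rw [← hadj, ← hHadj]; exact hM'.1 a b h, hM'.2⟩
  have key : ∀ M', IsMatching IH M' →
      margin IH M M' = margin IA M M' ∨ margin IH M M' = margin IB M M' := by
    intro M' hM'
    have hx : voteO IH x (M x) (M' x) = voteO IA x (M x) (M' x) ∨
        voteO IH x (M x) (M' x) = voteO IB x (M x) (M' x) := by
      rw [hMx]
      cases hmz : M' x with
      | none => left; simp [voteO, Better]
      | some z =>
        by_cases hzy : z = y
        · subst hzy; left
          simp [voteO, Better, IH.pref_irrefl, IA.pref_irrefl]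
        · have hadjxz : IA.adj x z := by
            rw [← hHadj]; exact hM'.1 x z hmz
          by_cases hA1 : IA.pref x z y
          · left
            have hH1 : IH.pref x z y := h5 z (Or.inl hA1)
            simp [voteO, Better, hH1, hA1,
              pref_asymm IH x z y hH1, pref_asymm IA x z y hA1]
          · by_cases hB1 : IB.pref x z y
            · right
              have hH1 : IH.pref x z y := h5 z (Or.inr hB1)
              simp [voteO, Better, hH1, hB1,
                pref_asymm IH x z y hH1, pref_asymm IB x z y hB1]
            · left
              have hH1 : IH.pref x y z := h6 z hadjxz hzy (by tauto)
              have hA2 : IA.pref x y z := by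
                rcases IA.pref_total x y z he hadjxz (Ne.symm hzy) with h | h
                · exact h
                · exact absurd h hA1
              simp [voteO, Better, hH1, hA2]
    rcases hx with hx | hx
    · left
      unfold margin
      rw [hHW, hHF]
      refine Finset.sum_congr rfl fun z _ => ?_
      by_cases hzx : z = x
      · subst hzx; exact hx
      · exact voteO_congr IH IA z (hHpref z hzx) _ _
    · right
      unfold margin
      rw [hHW, hHF, hW, hF]
      refine Finset.sum_congr rfl fun z _ => ?_
      by_cases hzx : z = x
      · subst hzx; exact hx
      · exact voteO_congr IH IB z
          (fun u v => (hHpref z hzx u v).trans (hprefAB z hzx u v)) _ _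
  constructor
  · intro M' hM'
    rcases key M' hM' with h | h
    · rw [h]; exact hA.1 M' (hmatchA M' hM')
    · rw [h]; exact hB.1 M' (hmatchB M' hM')
  · intro M' hM' hsz
    rcases key M' hM' with h | h
    · rw [h]; exact hA.2 M' (hmatchA M' hM') hsz
    · rw [h]; exact hB.2 M' (hmatchB M' hM') hsz
end

section
/- (Huang–Kavitha characterization) Let I be a MatP instance and M a matching. Then M is popular for I if and only if the subgraph G_M (obtained from G^I by deleting all (+,+) edges) satisfies all three of the following: (i) G_M contains no alternating cycle with respect to M that contains a (−,−) edge; (ii) G_M contains no alternating path with respect to M starting from a vertex unmatched in M that contains a (−,−) edge; and (iii) G_M contains no alternating path with respect to M whose both end edges are (−,−) edges. -/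
/-!
Switching `M` along a structure (i), (ii) or (iii), trading its `M`-edges for its other edges,
yields a matching that beats `M`. Each new edge lies in `G_M`, so its two endpoints give `M` at
most `0` votes in total, and `-2` if it is a `(−,−)` edge; only the at most two vertices that lose
their partner at an end of the path vote for `M`.

Conversely, let `S` be the set of vertices reached from a `(−,−)` edge by an alternating path in
`G_M` that ends with a non-matching edge. Without the three structures, the vertices of `S` are
matched, never to each other, and `S` is closed under "partner, then a non-matching edge of
`G_M`". The Huang–Kavitha witness, `+1` on `S`, `-1` on the partners of `S` and `0` elsewhere,
then has total at most `0`, and added to the votes it is nonnegative on every edge and on every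
unmatched vertex of any matching `M'`; summing over `M'` gives `Δ(M, M') ≥ 0`.
-/

open Classical

/-- `{x,y}` is a `(−,−)` edge with respect to `M`: a non-matching edge both of
whose endpoints prefer it to their situation in `M`. -/
def MinusMinus {α : Type*} (I : MatP α) (M : α → Option α) (x y : α) : Prop :=
  I.adj x y ∧ M x ≠ some y ∧ Better I x (some y) (M x) ∧ Better I y (some x) (M y)

/-- `{x,y}` is an edge of the subgraph `G_M` (all `(+,+)` edges deleted):
it is a matching edge or at least one endpoint prefers it to `M`. -/
def InGM {α : Type*} (I : MatP α) (M : α → Option α) (x y : α) : Prop :=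
  I.adj x y ∧ (M x = some y ∨ Better I x (some y) (M x) ∨ Better I y (some x) (M y))

/-- `v 0, v 1, …, v n` is an alternating path with respect to `M` in `G_M`:
distinct vertices, consecutive edges in `G_M`, edges alternately in and out of `M`. -/
def IsAltPath {α : Type*} (I : MatP α) (M : α → Option α) (n : ℕ) (v : ℕ → α) : Prop :=
  0 < n ∧
  (∀ i j, i ≤ n → j ≤ n → v i = v j → i = j) ∧
  (∀ i, i < n → InGM I M (v i) (v (i+1))) ∧
  (∀ i, i + 2 ≤ n → (M (v i) = some (v (i+1)) ↔ ¬ M (v (i+1)) = some (v (i+2))))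

/-- `v 0, v 1, …, v n = v 0` is an alternating cycle with respect to `M` in `G_M`. -/
def IsAltCycle {α : Type*} (I : MatP α) (M : α → Option α) (n : ℕ) (v : ℕ → α) : Prop :=
  2 ≤ n ∧ v n = v 0 ∧
  (∀ i j, i < n → j < n → v i = v j → i = j) ∧
  (∀ i, i < n → InGM I M (v i) (v (i+1))) ∧
  (∀ i, i + 2 ≤ n → (M (v i) = some (v (i+1)) ↔ ¬ M (v (i+1)) = some (v (i+2)))) ∧
  (M (v (n-1)) = some (v 0) ↔ ¬ M (v 0) = some (v 1))

theorem Finset.sum_nonneg_of_involution {ι M : Type*} [AddCommMonoid M] [LinearOrder M]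
    [IsOrderedCancelAddMonoid M] {s : Finset ι} {f : ι → M} (σ : ι → ι)
    (hσ_mem : ∀ x ∈ s, σ x ∈ s) (hσσ : ∀ x ∈ s, σ (σ x) = x)
    (hf : ∀ x ∈ s, 0 ≤ f x + f (σ x)) : 0 ≤ ∑ x ∈ s, f x := by
  have hcomp : ∑ x ∈ s, f (σ x) = ∑ x ∈ s, f x :=
    Finset.sum_nbij' σ σ hσ_mem hσ_mem hσσ hσσ fun _ _ => rfl
  have hdouble : 0 ≤ ∑ x ∈ s, f x + ∑ x ∈ s, f x := by
    calc 0 ≤ ∑ x ∈ s, (f x + f (σ x)) := Finset.sum_nonneg hf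
      _ = ∑ x ∈ s, f x + ∑ x ∈ s, f x := by rw [Finset.sum_add_distrib, hcomp]
  by_contra hneg
  exact (add_neg (not_le.mp hneg) (not_le.mp hneg)).not_ge hdouble

theorem Nat.add_one_mod_eq_ite {n : ℕ} (hn : 1 < n) (s : ℕ) :
    (s + 1) % n = if s % n + 1 < n then s % n + 1 else 0 := by
  have hsn := Nat.mod_lt s (show 0 < n by omega)
  rw [Nat.add_mod, Nat.one_mod_eq_one.mpr (by omega)]
  split_ifs with hs
  · exact Nat.mod_eq_of_lt hs
  · rw [show s % n + 1 = n by omega, Nat.mod_self]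

theorem Nat.exists_greatest_le_of_exists {P : ℕ → Prop} {q : ℕ} (h : ∃ j ≤ q, P j) :
    ∃ b ≤ q, P b ∧ ∀ j, b < j → j ≤ q → ¬ P j := by
  classical
  obtain ⟨j, hj, hPj⟩ := h
  exact ⟨_, Nat.findGreatest_le q, Nat.findGreatest_spec hj hPj,
    fun _ => Nat.findGreatest_is_greatest⟩

theorem iff_odd_of_iff_not_succ {E : ℕ → Prop} {n : ℕ} (h0 : ¬ E 0)
    (hE : ∀ i, i + 1 < n → (E i ↔ ¬ E (i + 1))) : ∀ i < n, E i ↔ Odd i := by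
  intro i hi
  induction i with
  | zero => exact iff_of_false h0 (by simp)
  | succ i ih =>
    rw [Nat.odd_add_one, ← ih (by omega), hE i hi, not_not]

section Basic

variable {α : Type*} {I : MatP α} {M : α → Option α} {x y : α}

theorem MatP.ne_of_adj (h : I.adj x y) : x ≠ y := by
  rintro rfl
  exact I.adj_loopless x h

theorem MatP.mem_of_adj [DecidableEq α] (h : I.adj x y) : x ∈ I.W ∪ I.F := by
  rcases I.adj_bipartite x y h with ⟨hx, -⟩ | ⟨hx, -⟩ <;> simp [hx]

theorem MatP.mem_W_iff_of_adj (h : I.adj x y) : x ∈ I.W ↔ y ∉ I.W := by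
  have hWF := Finset.disjoint_left.mp I.disjWF
  rcases I.adj_bipartite x y h with ⟨hx, hy⟩ | ⟨hx, hy⟩
  · exact iff_of_true hx fun hy' => hWF hy' hy
  · exact iff_of_false (fun hx' => hWF hx' hx) (not_not.mpr hy)

theorem IsMatching.symm (hM : IsMatching I M) (h : M x = some y) : M y = some x :=
  hM.2 x y h

theorem IsMatching.eq_some_comm (hM : IsMatching I M) : M x = some y ↔ M y = some x :=
  ⟨hM.symm, hM.symm⟩

theorem IsMatching.adj (hM : IsMatching I M) (h : M x = some y) : I.adj x y :=
  hM.1 x y h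

theorem IsMatching.ne (hM : IsMatching I M) (h : M x = some y) : x ≠ y :=
  MatP.ne_of_adj (hM.adj h)

theorem IsMatching.mem [DecidableEq α] (hM : IsMatching I M) (h : M x = some y) : y ∈ I.W ∪ I.F :=
  MatP.mem_of_adj (I.adj_symm x y (hM.adj h))

theorem Better.asymm {o o' : Option α} (h : Better I x o o') : ¬ Better I x o' o := by
  match o, o' with
  | some _, none => exact id
  | some y, some z => exact fun h' => I.pref_irrefl x y (I.pref_trans x y z y h h')
  | none, _ => exact h.elim

theorem MinusMinus.symm (hM : IsMatching I M) (h : MinusMinus I M x y) : MinusMinus I M y x :=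
  ⟨I.adj_symm x y h.1, fun h' => h.2.1 (hM.symm h'), h.2.2.2, h.2.2.1⟩

theorem MinusMinus.inGM (h : MinusMinus I M x y) : InGM I M x y :=
  ⟨h.1, Or.inr (Or.inl h.2.2.1)⟩

theorem InGM.symm (hM : IsMatching I M) (h : InGM I M x y) : InGM I M y x := by
  refine ⟨I.adj_symm x y h.1, ?_⟩
  rcases h.2 with h' | h' | h'
  exacts [Or.inl (hM.symm h'), Or.inr (Or.inr h'), Or.inr (Or.inl h')]

theorem voteO_le_one (o o' : Option α) : voteO I x o o' ≤ 1 := by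
  unfold voteO; split_ifs <;> omega

theorem voteO_self (o : Option α) : voteO I x o o = 0 := by
  have h : ¬ Better I x o o := fun h => h.asymm h
  simp [voteO, h]

theorem voteO_of_better {o o' : Option α} (h : Better I x o' o) : voteO I x o o' = -1 := by
  simp [voteO, h.asymm, h]

theorem voteO_some_none (y : α) : voteO I x (some y) none = 1 := by
  have h : Better I x (some y) none := trivial
  simp [voteO, h]

theorem voteO_eq_one_of_not_better (hM : IsMatching I M) (hadj : I.adj x y)
    (hne : M x ≠ some y) (hnb : ¬ Better I x (some y) (M x)) :
    voteO I x (M x) (some y) = 1 := by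
  rcases hMx : M x with _ | z
  · rw [hMx] at hnb; exact absurd trivial hnb
  rw [hMx] at hnb hne
  have hzy : z ≠ y := fun h => hne (h ▸ rfl)
  have hb : Better I x (some z) (some y) :=
    (I.pref_total x z y (hM.adj hMx) hadj hzy).resolve_right hnb
  simp [voteO, hb]

theorem vote_add_vote_nonpos (h : InGM I M x y) (hne : M x ≠ some y) :
    voteO I x (M x) (some y) + voteO I y (M y) (some x) ≤ 0 := by
  rcases h.2 with h' | h' | h'
  · exact absurd h' hne
  · linarith [voteO_of_better h', voteO_le_one (I := I) (x := y) (M y) (some x)]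
  · linarith [voteO_of_better h', voteO_le_one (I := I) (x := x) (M x) (some y)]

end Basic

section Switching

variable {α : Type*} {I : MatP α} {M N : α → Option α}

/-- The matching obtained from `M` by adding the edges of `N` and dropping the edges of `M`
that meet them. -/
def replaceWith (M N : α → Option α) (x : α) : Option α :=
  if N x ≠ none then N x else if ∃ y, M x = some y ∧ N y ≠ none then none else M x

theorem replaceWith_of_ne_none {x : α} (h : N x ≠ none) : replaceWith M N x = N x :=
  if_pos h

theorem replaceWith_of_displaced {x y : α} (hx : N x = none) (hxy : M x = some y)
    (hy : N y ≠ none) : replaceWith M N x = none := by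
  rw [replaceWith, if_neg (not_not.mpr hx), if_pos ⟨y, hxy, hy⟩]

theorem replaceWith_of_not_displaced {x : α} (hx : N x = none)
    (h : ¬ ∃ y, M x = some y ∧ N y ≠ none) : replaceWith M N x = M x := by
  rw [replaceWith, if_neg (not_not.mpr hx), if_neg h]

theorem replaceWith_eq_some {x y : α} (h : replaceWith M N x = some y) :
    N x = some y ∨ (N x = none ∧ N y = none ∧ M x = some y) := by
  by_cases hx : N x = none
  · by_cases ho : ∃ z, M x = some z ∧ N z ≠ none
    · obtain ⟨z, hz, hNz⟩ := ho
      simp [replaceWith_of_displaced hx hz hNz] at h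
    · rw [replaceWith_of_not_displaced hx ho] at h
      exact Or.inr ⟨hx, by_contra fun hy => ho ⟨y, h, hy⟩, h⟩
  · rw [replaceWith_of_ne_none hx] at h
    exact Or.inl h

theorem isMatching_replaceWith (hM : IsMatching I M) (hN : IsMatching I N) :
    IsMatching I (replaceWith M N) := by
  refine ⟨fun x y h => ?_, fun x y h => ?_⟩ <;>
    rcases replaceWith_eq_some h with hxy | ⟨hx, hy, hxy⟩
  · exact hN.adj hxy
  · exact hM.adj hxy
  · rw [replaceWith_of_ne_none (by simp [hN.symm hxy]), hN.symm hxy]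
  · rw [replaceWith_of_not_displaced hy, hM.symm hxy]
    rintro ⟨z, hz, hNz⟩
    rw [hM.symm hxy, Option.some.injEq] at hz
    exact hNz (hz ▸ hx)

variable (I M N) in
noncomputable def switchSlack (x : α) : ℤ :=
  (if N x = none ∧ ∃ y, M x = some y ∧ N y ≠ none then 1 else 0) -
    (if ∃ y, N x = some y ∧ MinusMinus I M x y then 1 else 0) -
    voteO I x (M x) (replaceWith M N x)

theorem switchSlack_eq_zero {x : α} (hx : N x = none) : switchSlack I M N x = 0 := by
  by_cases ho : ∃ y, M x = some y ∧ N y ≠ none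
  · obtain ⟨y, hxy, hy⟩ := ho
    simp [switchSlack, hx, replaceWith_of_displaced hx hxy hy, hxy, hy, voteO_some_none]
  · simp [switchSlack, hx, ho, replaceWith_of_not_displaced hx ho, voteO_self]

theorem switchSlack_add_switchSlack_nonneg (hM : IsMatching I M) (hN : IsMatching I N) {x y : α}
    (hxy : N x = some y) (hin : InGM I M x y) (hne : M x ≠ some y) :
    0 ≤ switchSlack I M N x + switchSlack I M N y := by
  have hyx := hN.symm hxy
  simp only [switchSlack, hxy, hyx, Option.some.injEq,
    replaceWith_of_ne_none (M := M) (N := N) (x := x) (by simp [hxy]),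
    replaceWith_of_ne_none (M := M) (N := N) (x := y) (by simp [hyx]),
    exists_eq_left', reduceCtorEq, false_and, if_false]
  by_cases hmm : MinusMinus I M x y
  · simp only [hmm, hmm.symm hM, if_true, voteO_of_better hmm.2.2.1,
      voteO_of_better (hmm.symm hM).2.2.1]
    norm_num
  · have hmm' : ¬ MinusMinus I M y x := fun h => hmm (h.symm hM)
    simp only [hmm, hmm', if_false]
    linarith [vote_add_vote_nonpos hin hne]

variable [DecidableEq α]

variable (I M N) in
noncomputable def displaced : Finset α :=
  (I.W ∪ I.F).filter fun x => N x = none ∧ ∃ y, M x = some y ∧ N y ≠ none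

variable (I M N) in
noncomputable def minusMinusEnds : Finset α :=
  (I.W ∪ I.F).filter fun x => ∃ y, N x = some y ∧ MinusMinus I M x y

/-- The slack is nonnegative on every orbit of `replaceWith M N`: the two votes on an `N`-edge of
`G_M` sum to at most `0` (to `-2` on a `(−,−)` edge), a displaced vertex casts `+1`, and the kept
`M`-edges cast `0`. -/
theorem margin_replaceWith_add_card_le (hM : IsMatching I M) (hN : IsMatching I N)
    (hNM : ∀ x y, N x = some y → InGM I M x y ∧ M x ≠ some y) :
    margin I M (replaceWith M N) + (minusMinusEnds I M N).card ≤ (displaced I M N).card := by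
  have hM' := isMatching_replaceWith hM hN
  have hsum := Finset.sum_nonneg_of_involution (s := I.W ∪ I.F) (f := switchSlack I M N)
    (fun x => (replaceWith M N x).getD x) ?_ ?_ ?_
  · simp only [switchSlack, Finset.sum_sub_distrib, Finset.sum_boole] at hsum
    unfold margin displaced minusMinusEnds
    linarith
  all_goals intro x hx; rcases hxM : replaceWith M N x with _ | y
  · simpa using hx
  · simpa using hM'.mem hxM
  · simp [hxM]
  · simp [hM'.symm hxM]
  · have hx : N x = none := by
      by_contra h
      exact h (replaceWith_of_ne_none h ▸ hxM)
    simp [switchSlack_eq_zero hx]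
  · rcases replaceWith_eq_some hxM with hxy | ⟨hx, hy, -⟩
    · exact switchSlack_add_switchSlack_nonneg hM hN hxy (hNM x y hxy).1 (hNM x y hxy).2
    · simp [switchSlack_eq_zero hx, switchSlack_eq_zero hy]

theorem not_popular_of_card_displaced_lt (hM : IsMatching I M) (hN : IsMatching I N)
    (hNM : ∀ x y, N x = some y → InGM I M x y ∧ M x ≠ some y)
    (hlt : (displaced I M N).card < (minusMinusEnds I M N).card) : ¬ Popular I M := fun hpop => by
  have := hpop _ (isMatching_replaceWith hM hN)
  have := margin_replaceWith_add_card_le hM hN hNM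
  omega

end Switching

section OddAltPath

variable {α : Type*} {I : MatP α} {M : α → Option α}

/-- An alternating path `v 0, …, v n` in `G_M` whose first and last edges are not in `M`. -/
structure IsOddAltPath (I : MatP α) (M : α → Option α) (n : ℕ) (v : ℕ → α) : Prop where
  odd : Odd n
  injOn : ∀ i j, i ≤ n → j ≤ n → v i = v j → i = j
  inGM : ∀ i < n, InGM I M (v i) (v (i + 1))
  matched_iff : ∀ i < n, M (v i) = some (v (i + 1)) ↔ Odd i

def seqAppend (P : ℕ → α) (p : ℕ) (Q : ℕ → α) (j : ℕ) : α :=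
  if j ≤ p then P j else Q (j - (p + 1))

theorem seqAppend_of_le {P Q : ℕ → α} {p j : ℕ} (h : j ≤ p) : seqAppend P p Q j = P j :=
  if_pos h

theorem seqAppend_of_lt {P Q : ℕ → α} {p j : ℕ} (h : p < j) :
    seqAppend P p Q j = Q (j - (p + 1)) :=
  if_neg (Nat.not_le.mpr h)

theorem isOddAltPath_pair {x y : α} (hxy : InGM I M x y) (hne : M x ≠ some y) :
    IsOddAltPath I M 1 (fun j => if j = 0 then x else y) := by
  have hx : x ≠ y := MatP.ne_of_adj hxy.1
  refine ⟨odd_one, ?_, ?_, ?_⟩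
  · intro i j hi hj hij
    interval_cases i <;> interval_cases j <;> simp_all [eq_comm]
  · intro i hi
    obtain rfl : i = 0 := by omega
    simpa using hxy
  · intro i hi
    obtain rfl : i = 0 := by omega
    simpa using hne

namespace IsOddAltPath

variable {n : ℕ} {v : ℕ → α}

theorem matched_of_odd (h : IsOddAltPath I M n v) {i : ℕ} (hi : Odd i) (hin : i < n) :
    M (v i) = some (v (i + 1)) :=
  (h.matched_iff i hin).mpr hi

theorem not_matched_of_even (h : IsOddAltPath I M n v) {i : ℕ} (hi : Even i) (hin : i < n) :
    M (v i) ≠ some (v (i + 1)) :=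
  fun h' => Nat.not_odd_iff_even.mpr hi ((h.matched_iff i hin).mp h')

theorem matched_of_even (hM : IsMatching I M) (h : IsOddAltPath I M n v) {i : ℕ} (hi : Even i)
    (hi0 : 0 < i) (hin : i ≤ n) : M (v i) = some (v (i - 1)) := by
  have hodd : Odd (i - 1) := by
    rw [Nat.odd_iff]; rw [Nat.even_iff] at hi; omega
  have := hM.symm (h.matched_of_odd hodd (by omega))
  rwa [Nat.sub_add_cancel hi0] at this

theorem eq_zero_of_matched_last (hM : IsMatching I M) (h : IsOddAltPath I M n v) {k : ℕ}
    (hk : k ≤ n) (hkn : M (v k) = some (v n)) : k = 0 := by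
  have hn := Nat.odd_iff.mp h.odd
  rcases Nat.even_or_odd k with hk' | hk'
  · by_contra hk0
    rw [h.matched_of_even hM hk' (Nat.pos_of_ne_zero hk0) hk, Option.some.injEq] at hkn
    have := h.injOn _ _ (by omega) le_rfl hkn
    omega
  · have hkn' : k < n := by
      refine lt_of_le_of_ne hk fun hkn' => hM.ne hkn ?_
      rw [hkn']
    rw [h.matched_of_odd hk' hkn', Option.some.injEq] at hkn
    have := h.injOn _ _ (by omega) le_rfl hkn
    rw [Nat.odd_iff] at hk'
    omega

theorem mem_W_iff (h : IsOddAltPath I M n v) {i : ℕ} (hi : i ≤ n) :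
    (v i ∈ I.W ↔ v 0 ∈ I.W) ↔ Even i := by
  induction i with
  | zero => simp
  | succ i ih =>
    have hstep := MatP.mem_W_iff_of_adj (h.inGM i (by omega)).1
    rw [Nat.even_add_one, ← ih (by omega)]
    tauto

/-- `I` is bipartite and `P 0, P p, Q q, Q 0` lie on alternating sides. -/
theorem even_iff_not_even_of_eq {p q a b : ℕ} {P Q : ℕ → α}
    (hP : IsOddAltPath I M p P) (hQ : IsOddAltPath I M q Q) (hadj : I.adj (P p) (Q q))
    (ha : a ≤ p) (hb : b ≤ q) (hab : P a = Q b) : Even a ↔ ¬ Even b := by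
  have hPa := hP.mem_W_iff ha
  have hQb := hQ.mem_W_iff hb
  have hPp := hP.mem_W_iff le_rfl
  have hQq := hQ.mem_W_iff le_rfl
  have hpq := MatP.mem_W_iff_of_adj hadj
  rw [hab] at hPa
  simp only [Nat.not_even_iff_odd.mpr hP.odd, Nat.not_even_iff_odd.mpr hQ.odd, iff_false] at hPp hQq
  tauto

theorem isAltPath (h : IsOddAltPath I M n v) : IsAltPath I M n v := by
  refine ⟨h.odd.pos, h.injOn, h.inGM, fun i hi => ?_⟩
  rw [h.matched_iff i (by omega), h.matched_iff (i + 1) (by omega), Nat.odd_add_one, not_not]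

theorem take (h : IsOddAltPath I M n v) {m : ℕ} (hm : Odd m) (hmn : m ≤ n) :
    IsOddAltPath I M m v :=
  ⟨hm, fun i j hi hj => h.injOn i j (by omega) (by omega), fun i hi => h.inGM i (by omega),
    fun i hi => h.matched_iff i (by omega)⟩

theorem shift (h : IsOddAltPath I M n v) {k : ℕ} (hk : Even k) (hkn : k < n) :
    IsOddAltPath I M (n - k) (fun j => v (k + j)) := by
  refine ⟨Nat.Odd.sub_even hkn.le h.odd hk, fun i j hi hj hij => ?_, fun i hi => ?_,
    fun i hi => ?_⟩
  · have := h.injOn _ _ (by omega) (by omega) hij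
    omega
  · exact h.inGM (k + i) (by omega)
  · rw [← add_assoc, h.matched_iff (k + i) (by omega), Nat.odd_iff, Nat.odd_iff]
    rw [Nat.even_iff] at hk
    omega

theorem reverse (hM : IsMatching I M) (h : IsOddAltPath I M n v) :
    IsOddAltPath I M n (fun j => v (n - j)) := by
  have hn := Nat.odd_iff.mp h.odd
  refine ⟨h.odd, fun i j hi hj hij => ?_, fun i hi => ?_, fun i hi => ?_⟩
  · have := h.injOn _ _ (by omega) (by omega) hij
    omega
  all_goals obtain ⟨k, hk, rfl⟩ : ∃ k < n, i = n - (k + 1) := ⟨n - (i + 1), by omega, by omega⟩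
  all_goals rw [show n - (n - (k + 1)) = k + 1 by omega, show n - (n - (k + 1) + 1) = k by omega]
  · exact (h.inGM k hk).symm hM
  · rw [← hM.eq_some_comm, h.matched_iff k hk, Nat.odd_iff, Nat.odd_iff]
    omega

theorem append {p q : ℕ} {P Q : ℕ → α} (hM : IsMatching I M) (hP : IsOddAltPath I M p P)
    (hQ : IsOddAltPath I M q Q) (hPQ : M (P p) = some (Q 0))
    (hdisj : ∀ i ≤ p, ∀ j ≤ q, P i ≠ Q j) :
    IsOddAltPath I M (p + 1 + q) (seqAppend P p Q) := by
  have hp := Nat.odd_iff.mp hP.odd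
  have hq := Nat.odd_iff.mp hQ.odd
  refine ⟨Nat.odd_iff.mpr (by omega), fun i j hi hj hij => ?_, fun i hi => ?_, fun i hi => ?_⟩
  · rcases le_or_gt i p with hip | hip <;> rcases le_or_gt j p with hjp | hjp
    · rw [seqAppend_of_le hip, seqAppend_of_le hjp] at hij
      exact hP.injOn i j hip hjp hij
    · rw [seqAppend_of_le hip, seqAppend_of_lt hjp] at hij
      exact absurd hij (hdisj i hip _ (by omega))
    · rw [seqAppend_of_lt hip, seqAppend_of_le hjp] at hij
      exact absurd hij.symm (hdisj j hjp _ (by omega))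
    · rw [seqAppend_of_lt hip, seqAppend_of_lt hjp] at hij
      have := hQ.injOn _ _ (by omega) (by omega) hij
      omega
  · rcases lt_trichotomy i p with hip | rfl | hip
    · rw [seqAppend_of_le hip.le, seqAppend_of_le hip]
      exact hP.inGM i hip
    · rw [seqAppend_of_le le_rfl, seqAppend_of_lt (Nat.lt_succ_self i), Nat.sub_self]
      exact ⟨hM.adj hPQ, Or.inl hPQ⟩
    · rw [seqAppend_of_lt hip, seqAppend_of_lt (by omega),
        show i + 1 - (p + 1) = i - (p + 1) + 1 by omega]
      exact hQ.inGM _ (by omega)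
  · rcases lt_trichotomy i p with hip | rfl | hip
    · rw [seqAppend_of_le hip.le, seqAppend_of_le hip]
      exact hP.matched_iff i hip
    · rw [seqAppend_of_le le_rfl, seqAppend_of_lt (Nat.lt_succ_self i), Nat.sub_self]
      exact iff_of_true hPQ hP.odd
    · rw [seqAppend_of_lt hip, seqAppend_of_lt (by omega),
        show i + 1 - (p + 1) = i - (p + 1) + 1 by omega, hQ.matched_iff _ (by omega),
        Nat.odd_iff, Nat.odd_iff]
      omega

theorem isAltCycle (hM : IsMatching I M) (h : IsOddAltPath I M n v)
    (hclose : M (v n) = some (v 0)) :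
    IsAltCycle I M (n + 1) (fun j => if j ≤ n then v j else v 0) := by
  have hn := Nat.odd_iff.mp h.odd
  have hlast : M (v (n - 1)) ≠ some (v n) := by
    have := h.not_matched_of_even (i := n - 1) (Nat.even_iff.mpr (by omega)) (by omega)
    rwa [Nat.sub_add_cancel (by omega)] at this
  refine ⟨by omega, by simp, fun i j hi hj hij => ?_, fun i hi => ?_, fun i hi => ?_, ?_⟩
  · simp only [show i ≤ n by omega, show j ≤ n by omega, if_true] at hij
    exact h.injOn i j (by omega) (by omega) hij
  · rcases lt_or_eq_of_le (Nat.lt_succ_iff.mp hi) with hin | rfl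
    · simpa [hin.le, Nat.succ_le_of_lt hin] using h.inGM i hin
    · simp only [le_rfl, if_true, show ¬ i + 1 ≤ i by omega, if_false]
      exact ⟨hM.adj hclose, Or.inl hclose⟩
  · rcases lt_or_eq_of_le (show i + 1 ≤ n by omega) with hin | hin
    · simp only [show i ≤ n by omega, show i + 1 ≤ n by omega, show i + 2 ≤ n by omega, if_true]
      rw [h.matched_iff i (by omega), h.matched_iff (i + 1) hin, Nat.odd_add_one, not_not]
    · obtain rfl : i = n - 1 := by omega
      simp only [show n - 1 ≤ n by omega, show ¬ n - 1 + 2 ≤ n by omega, if_true, if_false,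
        Nat.sub_add_cancel h.odd.pos, le_rfl]
      exact iff_of_false hlast (not_not.mpr hclose)
  · simp only [Nat.add_sub_cancel, le_rfl, Nat.zero_le, show 1 ≤ n from h.odd.pos, if_true]
    have := h.not_matched_of_even (Nat.even_iff.mpr rfl) h.odd.pos
    exact iff_of_true hclose this

end IsOddAltPath

end OddAltPath

section PathMatching

variable {α : Type*} {I : MatP α} {M : α → Option α}

/-- The matching `{v 0, v 1}, {v 2, v 3}, …` formed by the even edges of a path `v 0, …, v n`. -/
noncomputable def pathMatching (n : ℕ) (v : ℕ → α) (x : α) : Option α :=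
  if h : ∃ k ≤ n, v k = x then
    some (v (if Even (Nat.find h) then Nat.find h + 1 else Nat.find h - 1))
  else none

variable {n k : ℕ} {v : ℕ → α}

theorem pathMatching_apply (hinj : ∀ i j, i ≤ n → j ≤ n → v i = v j → i = j) (hk : k ≤ n) :
    pathMatching n v (v k) = some (v (if Even k then k + 1 else k - 1)) := by
  have h : ∃ i ≤ n, v i = v k := ⟨k, hk, rfl⟩
  have hfind : Nat.find h = k := hinj _ _ (Nat.find_spec h).1 hk (Nat.find_spec h).2
  rw [pathMatching, dif_pos h, hfind]

theorem pathMatching_eq_some {x y : α} (h : pathMatching n v x = some y) :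
    ∃ k ≤ n, v k = x ∧ y = v (if Even k then k + 1 else k - 1) := by
  by_cases hx : ∃ k ≤ n, v k = x
  · rw [pathMatching, dif_pos hx, Option.some.injEq] at h
    exact ⟨_, (Nat.find_spec hx).1, (Nat.find_spec hx).2, h.symm⟩
  · rw [pathMatching, dif_neg hx] at h
    exact absurd h (by simp)

namespace IsOddAltPath

theorem pathMatching_of_even (h : IsOddAltPath I M n v) (hk : Even k) (hkn : k ≤ n) :
    pathMatching n v (v k) = some (v (k + 1)) := by
  rw [pathMatching_apply h.injOn hkn, if_pos hk]

theorem pathMatching_of_odd (h : IsOddAltPath I M n v) (hk : Odd k) (hkn : k ≤ n) :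
    pathMatching n v (v k) = some (v (k - 1)) := by
  rw [pathMatching_apply h.injOn hkn, if_neg (Nat.not_even_iff_odd.mpr hk)]

theorem pathMatching_ne_none (h : IsOddAltPath I M n v) (hkn : k ≤ n) :
    pathMatching n v (v k) ≠ none := by
  simp [pathMatching_apply h.injOn hkn]

theorem pathMatching_edge (hM : IsMatching I M) (h : IsOddAltPath I M n v) {x y : α}
    (hxy : pathMatching n v x = some y) : InGM I M x y ∧ M x ≠ some y := by
  obtain ⟨k, hkn, rfl, rfl⟩ := pathMatching_eq_some hxy
  have hn := Nat.odd_iff.mp h.odd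
  by_cases hk : Even k
  · have hk' := Nat.even_iff.mp hk
    rw [if_pos hk]
    exact ⟨h.inGM k (by omega), h.not_matched_of_even hk (by omega)⟩
  · have hk' := Nat.odd_iff.mp (Nat.not_even_iff_odd.mp hk)
    rw [if_neg hk]
    have hprev := h.not_matched_of_even (i := k - 1) (Nat.even_iff.mpr (by omega)) (by omega)
    rw [Nat.sub_add_cancel (by omega)] at hprev
    refine ⟨?_, fun h' => hprev (hM.symm h')⟩
    have := (h.inGM (k - 1) (by omega)).symm hM
    rwa [Nat.sub_add_cancel (by omega)] at this

theorem isMatching_pathMatching (hM : IsMatching I M) (h : IsOddAltPath I M n v) :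
    IsMatching I (pathMatching n v) := by
  refine ⟨fun x y hxy => (h.pathMatching_edge hM hxy).1.1, fun x y hxy => ?_⟩
  obtain ⟨k, hkn, rfl, rfl⟩ := pathMatching_eq_some hxy
  have hn := Nat.odd_iff.mp h.odd
  by_cases hk : Even k
  · have hk' := Nat.even_iff.mp hk
    rw [if_pos hk, h.pathMatching_of_odd (Nat.odd_iff.mpr (by omega)) (by omega),
      Nat.add_sub_cancel]
  · have hk' := Nat.odd_iff.mp (Nat.not_even_iff_odd.mp hk)
    rw [if_neg hk, h.pathMatching_of_even (Nat.even_iff.mpr (by omega)) (by omega),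
      Nat.sub_add_cancel (by omega)]

theorem displaced_partner_eq_end (hM : IsMatching I M) (h : IsOddAltPath I M n v) {x y : α}
    (hx : pathMatching n v x = none) (hxy : M x = some y) (hy : pathMatching n v y ≠ none) :
    y = v 0 ∨ y = v n := by
  obtain ⟨z, hz⟩ := Option.ne_none_iff_exists'.mp hy
  obtain ⟨k, hkn, rfl, -⟩ := pathMatching_eq_some hz
  have hyx := hM.symm hxy
  rcases Nat.eq_zero_or_pos k with rfl | hk0
  · exact Or.inl rfl
  rcases eq_or_lt_of_le hkn with rfl | hkn'
  · exact Or.inr rfl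
  exfalso
  rcases Nat.even_or_odd k with hk | hk
  · rw [h.matched_of_even hM hk hk0 hkn, Option.some.injEq] at hyx
    exact h.pathMatching_ne_none (k := k - 1) (by omega) (hyx ▸ hx)
  · rw [h.matched_of_odd hk hkn', Option.some.injEq] at hyx
    exact h.pathMatching_ne_none (k := k + 1) (by omega) (hyx ▸ hx)

end IsOddAltPath

end PathMatching

section Forward

variable {α : Type*} {I : MatP α} {M : α → Option α}

theorem IsAltPath.matched_iff_odd {n : ℕ} {v : ℕ → α} (h : IsAltPath I M n v)
    (h0 : M (v 0) ≠ some (v 1)) : ∀ i < n, M (v i) = some (v (i + 1)) ↔ Odd i :=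
  iff_odd_of_iff_not_succ h0 fun i hi => h.2.2.2 i (by omega)

theorem IsAltPath.isOddAltPath {n m : ℕ} {v : ℕ → α} (h : IsAltPath I M n v)
    (h0 : M (v 0) ≠ some (v 1)) (hm : Odd m) (hmn : m ≤ n) : IsOddAltPath I M m v :=
  ⟨hm, fun i j hi hj => h.2.1 i j (by omega) (by omega), fun i hi => h.2.2.1 i (by omega),
    fun i hi => h.matched_iff_odd h0 i (by omega)⟩

namespace IsAltCycle

variable {n : ℕ} {v : ℕ → α}

theorem apply_add_one_mod (h : IsAltCycle I M n v) (s : ℕ) : v ((s + 1) % n) = v (s % n + 1) := by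
  have hsn := Nat.mod_lt s (show 0 < n by have := h.1; omega)
  rw [Nat.add_one_mod_eq_ite (by have := h.1; omega)]
  split_ifs with hs
  · rfl
  · rw [show s % n + 1 = n by omega, h.2.1]

theorem matched_mod_iff (h : IsAltCycle I M n v) (s : ℕ) :
    M (v (s % n)) = some (v (s % n + 1)) ↔
      ¬ M (v ((s + 1) % n)) = some (v ((s + 1) % n + 1)) := by
  obtain ⟨hn, hvn, -, -, halt, hwrap⟩ := h
  have hsn := Nat.mod_lt s (show 0 < n by omega)
  rw [Nat.add_one_mod_eq_ite (by omega)]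
  split_ifs with hs
  · exact halt _ (by omega)
  · rw [show s % n + 1 = n by omega, hvn, show s % n = n - 1 by omega]
    exact hwrap

/-- Rotating an alternating cycle to start at one of its `(−,−)` edges makes it an odd alternating
path whose end is matched to its start. -/
theorem exists_isOddAltPath {i₀ : ℕ} (h : IsAltCycle I M n v) (hi₀ : i₀ < n)
    (hmm : MinusMinus I M (v i₀) (v (i₀ + 1))) :
    ∃ m w, IsOddAltPath I M m w ∧ M (w m) = some (w 0) ∧ MinusMinus I M (w 0) (w 1) := by
  have hn := h.1
  set w : ℕ → α := fun j => v ((i₀ + j) % n) with hw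
  have hw1 : ∀ j, w (j + 1) = v ((i₀ + j) % n + 1) := fun j => by
    simp only [hw, ← add_assoc, h.apply_add_one_mod]
  set E : ℕ → Prop := fun s => M (v (s % n)) = some (v (s % n + 1)) with hE
  have hEalt : ∀ s, E s ↔ ¬ E (s + 1) := h.matched_mod_iff
  have hwE : ∀ j, M (w j) = some (w (j + 1)) ↔ E (i₀ + j) := fun j => by rw [hw1]
  have hpat : ∀ j < n + 1, E (i₀ + j) ↔ Odd j := by
    refine iff_odd_of_iff_not_succ ?_ fun j _ => ?_
    · simpa [hE, Nat.mod_eq_of_lt hi₀] using hmm.2.1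
    · rw [← add_assoc]
      exact hEalt _
  have hlast : E (i₀ + (n - 1)) := by
    have hEn : E (i₀ + 0 + n) ↔ E (i₀ + 0) := by simp [hE]
    rw [hEalt, show i₀ + (n - 1) + 1 = i₀ + 0 + n by omega, hEn, hpat 0 (by omega)]
    simp
  refine ⟨n - 1, w, ⟨(hpat (n - 1) (by omega)).mp hlast, fun i j hi hj hij => ?_, fun j hj => ?_,
    fun j hj => (hwE j).trans (hpat j (by omega))⟩, ?_, ?_⟩
  · have := h.2.2.1 _ _ (Nat.mod_lt _ (by omega)) (Nat.mod_lt _ (by omega)) hij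
    have := Nat.ModEq.add_left_cancel' i₀ this
    rwa [Nat.ModEq, Nat.mod_eq_of_lt (by omega), Nat.mod_eq_of_lt (by omega)] at this
  · rw [hw1]
    exact h.2.2.2.1 _ (Nat.mod_lt _ (by omega))
  · have := (hwE (n - 1)).mpr hlast
    rwa [Nat.sub_add_cancel (by omega), show w n = w 0 by simp [hw]] at this
  · rw [show w 1 = v (i₀ + 1) by simp [hw1, Nat.mod_eq_of_lt hi₀],
      show w 0 = v i₀ by simp [hw, Nat.mod_eq_of_lt hi₀]]
    exact hmm

end IsAltCycle

end Forward

section NotPopular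

variable {α : Type*} [DecidableEq α] {I : MatP α} {M : α → Option α}

theorem IsMatching.card_filter_eq_some_le_one (hM : IsMatching I M) (s : Finset α) (y : α) :
    (s.filter fun x => M x = some y).card ≤ 1 := by
  refine Finset.card_le_one.mpr fun a ha b hb => ?_
  have := (hM.symm (Finset.mem_filter.mp ha).2).symm.trans (hM.symm (Finset.mem_filter.mp hb).2)
  exact Option.some.inj this

namespace IsOddAltPath

variable {n k : ℕ} {v : ℕ → α}

theorem pair_subset_minusMinusEnds (hM : IsMatching I M) (h : IsOddAltPath I M n v)
    (hk : Even k) (hkn : k < n) (hmm : MinusMinus I M (v k) (v (k + 1))) :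
    {v k, v (k + 1)} ⊆ minusMinusEnds I M (pathMatching n v) := by
  have hk1 := h.pathMatching_of_odd (Nat.odd_add_one.mpr (Nat.not_odd_iff_even.mpr hk))
    (by omega : k + 1 ≤ n)
  intro x hx
  simp only [Finset.mem_insert, Finset.mem_singleton] at hx
  rcases hx with rfl | rfl
  · exact Finset.mem_filter.mpr ⟨MatP.mem_of_adj hmm.1, _, h.pathMatching_of_even hk hkn.le, hmm⟩
  · exact Finset.mem_filter.mpr
      ⟨MatP.mem_of_adj (hmm.symm hM).1, _, hk1, by simpa using hmm.symm hM⟩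

theorem displaced_subset (hM : IsMatching I M) (h : IsOddAltPath I M n v) :
    displaced I M (pathMatching n v) ⊆ (I.W ∪ I.F).filter (fun x => M x = some (v 0)) ∪
      (I.W ∪ I.F).filter (fun x => M x = some (v n)) := by
  intro x hx
  obtain ⟨hxWF, hx, y, hxy, hy⟩ := Finset.mem_filter.mp hx
  rcases h.displaced_partner_eq_end hM hx hxy hy with rfl | rfl
  · exact Finset.mem_union_left _ (Finset.mem_filter.mpr ⟨hxWF, hxy⟩)
  · exact Finset.mem_union_right _ (Finset.mem_filter.mpr ⟨hxWF, hxy⟩)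

theorem card_displaced_le_two (hM : IsMatching I M) (h : IsOddAltPath I M n v) :
    (displaced I M (pathMatching n v)).card ≤ 2 :=
  (Finset.card_le_card (h.displaced_subset hM)).trans ((Finset.card_union_le _ _).trans
    (add_le_add (hM.card_filter_eq_some_le_one _ _) (hM.card_filter_eq_some_le_one _ _)))

theorem not_popular_of_unmatched_start (hM : IsMatching I M) (h : IsOddAltPath I M n v)
    (h0 : M (v 0) = none) (hmm : MinusMinus I M (v (n - 1)) (v n)) : ¬ Popular I M := by
  have hn := Nat.odd_iff.mp h.odd
  have hmm' : MinusMinus I M (v (n - 1)) (v (n - 1 + 1)) := by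
    rwa [Nat.sub_add_cancel (by omega)]
  have hgain := Finset.card_le_card (h.pair_subset_minusMinusEnds hM (k := n - 1)
    (Nat.even_iff.mpr (by omega)) (by omega) hmm')
  rw [Finset.card_pair (MatP.ne_of_adj hmm'.1)] at hgain
  have hloss : (displaced I M (pathMatching n v)).card ≤ 1 := by
    refine (Finset.card_le_card fun x hx => ?_).trans
      (hM.card_filter_eq_some_le_one (I.W ∪ I.F) (v n))
    rcases Finset.mem_union.mp (h.displaced_subset hM hx) with hx0 | hxn
    · have := hM.symm (Finset.mem_filter.mp hx0).2
      simp [h0] at this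
    · exact hxn
  exact not_popular_of_card_displaced_lt hM (h.isMatching_pathMatching hM)
    (fun _ _ => h.pathMatching_edge hM) (by omega)

theorem not_popular_of_minusMinus_ends (hM : IsMatching I M) (h : IsOddAltPath I M n v)
    (hn : 3 ≤ n) (h0 : MinusMinus I M (v 0) (v 1)) (hmm : MinusMinus I M (v (n - 1)) (v n)) :
    ¬ Popular I M := by
  have hmm' : MinusMinus I M (v (n - 1)) (v (n - 1 + 1)) := by
    rwa [Nat.sub_add_cancel (by omega)]
  have hgain := Finset.card_le_card (Finset.union_subset
    (h.pair_subset_minusMinusEnds hM (Nat.even_iff.mpr rfl) h.odd.pos h0)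
    (h.pair_subset_minusMinusEnds hM (k := n - 1)
      (Nat.even_iff.mpr (by have := Nat.odd_iff.mp h.odd; omega)) (by omega) hmm'))
  have hne : ∀ i j, i ≤ n → j ≤ n → i ≠ j → v i ≠ v j := fun i j hi hj hij hv =>
    hij (h.injOn i j hi hj hv)
  rw [Finset.card_union_of_disjoint (by
      simp only [Finset.disjoint_insert_left, Finset.disjoint_insert_right,
        Finset.disjoint_singleton, Finset.mem_insert, Finset.mem_singleton]
      refine ⟨?_, ?_⟩ <;> push Not <;> refine ⟨?_, ?_⟩ <;>
        exact hne _ _ (by omega) (by omega) (by omega)),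
    Finset.card_pair (MatP.ne_of_adj h0.1), Finset.card_pair (MatP.ne_of_adj hmm'.1)] at hgain
  exact not_popular_of_card_displaced_lt hM (h.isMatching_pathMatching hM)
    (fun _ _ => h.pathMatching_edge hM) (by have := h.card_displaced_le_two hM; omega)

theorem not_popular_of_closed (hM : IsMatching I M) (h : IsOddAltPath I M n v)
    (hclose : M (v n) = some (v 0)) (h0 : MinusMinus I M (v 0) (v 1)) : ¬ Popular I M := by
  have hgain := Finset.card_le_card
    (h.pair_subset_minusMinusEnds hM (Nat.even_iff.mpr rfl) h.odd.pos h0)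
  rw [Finset.card_pair (MatP.ne_of_adj h0.1)] at hgain
  have hloss : displaced I M (pathMatching n v) = ∅ := by
    refine Finset.filter_eq_empty_iff.mpr ?_
    rintro x - ⟨hx, y, hxy, hy⟩
    rcases h.displaced_partner_eq_end hM hx hxy hy with rfl | rfl
    · rw [← hM.eq_some_comm, hM.eq_some_comm.mp hclose, Option.some.injEq] at hxy
      exact h.pathMatching_ne_none le_rfl (hxy ▸ hx)
    · rw [← hM.eq_some_comm, hclose, Option.some.injEq] at hxy
      exact h.pathMatching_ne_none (Nat.zero_le n) (hxy ▸ hx)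
  exact not_popular_of_card_displaced_lt hM (h.isMatching_pathMatching hM)
    (fun _ _ => h.pathMatching_edge hM) (by rw [hloss, Finset.card_empty]; omega)

end IsOddAltPath

theorem IsAltCycle.not_popular {n i : ℕ} {v : ℕ → α} (hM : IsMatching I M)
    (h : IsAltCycle I M n v) (hi : i < n) (hmm : MinusMinus I M (v i) (v (i + 1))) :
    ¬ Popular I M := by
  obtain ⟨m, w, hw, hclose, hmm'⟩ := h.exists_isOddAltPath hi hmm
  exact hw.not_popular_of_closed hM hclose hmm'

namespace IsAltPath

variable {n : ℕ} {v : ℕ → α}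

theorem not_popular_of_unmatched_start {i : ℕ} (hM : IsMatching I M) (h : IsAltPath I M n v)
    (h0 : M (v 0) = none) (hi : i < n) (hmm : MinusMinus I M (v i) (v (i + 1))) :
    ¬ Popular I M := by
  have h01 : M (v 0) ≠ some (v 1) := by simp [h0]
  have hi' : Even i := Nat.not_odd_iff_even.mp fun ho =>
    hmm.2.1 ((h.matched_iff_odd h01 i hi).mpr ho)
  exact (h.isOddAltPath h01 hi'.add_one hi).not_popular_of_unmatched_start hM h0
    (by simpa using hmm)

theorem not_popular_of_minusMinus_ends (hM : IsMatching I M) (h : IsAltPath I M n v)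
    (hn : 2 ≤ n) (h0 : MinusMinus I M (v 0) (v 1)) (hmm : MinusMinus I M (v (n - 1)) (v n)) :
    ¬ Popular I M := by
  have hlast := mt (h.matched_iff_odd h0.2.1 (n - 1) (by omega)).mpr
  rw [Nat.sub_add_cancel (by omega)] at hlast
  have hodd : Odd n := by
    simpa [Nat.sub_add_cancel (by omega : 1 ≤ n)] using
      (Nat.not_odd_iff_even.mp (hlast hmm.2.1)).add_one
  exact (h.isOddAltPath h0.2.1 hodd le_rfl).not_popular_of_minusMinus_ends hM
    (by have := Nat.odd_iff.mp hodd; omega) h0 hmm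

end IsAltPath

end NotPopular

section Witness

variable {α : Type*} {I : MatP α} {M : α → Option α}

structure IsWitnessSet (I : MatP α) (M : α → Option α) (S : α → Prop) : Prop where
  matched : ∀ x, S x → M x ≠ none
  not_partner : ∀ x y, S x → M x = some y → ¬ S y
  minusMinus : ∀ x y, MinusMinus I M x y → S y
  closed : ∀ s a b, S s → M s = some a → InGM I M a b → M a ≠ some b → S b

/-- The dual certificate of Huang–Kavitha: `+1` on `S`, `-1` on the partners of `S`. -/
noncomputable def witness (M : α → Option α) (S : α → Prop) (x : α) : ℤ :=
  (if S x then 1 else 0) - (if ∃ s, M x = some s ∧ S s then 1 else 0)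

namespace IsWitnessSet

variable {S : α → Prop} {x y : α}

theorem neg_one_le_witness : -1 ≤ witness M S x := by
  unfold witness; split_ifs <;> omega

theorem witness_nonneg_of_not_partner (h : ¬ ∃ s, M x = some s ∧ S s) :
    0 ≤ witness M S x := by
  unfold witness; split_ifs <;> omega

theorem witness_eq_one (hS : IsWitnessSet I M S) (hx : S x) : witness M S x = 1 := by
  have h : ¬ ∃ s, M x = some s ∧ S s := fun ⟨s, hs, hSs⟩ => hS.not_partner x s hx hs hSs
  simp [witness, hx, h]

theorem witness_eq_zero_of_none (hS : IsWitnessSet I M S) (hx : M x = none) :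
    witness M S x = 0 := by
  have h : ¬ S x := fun hSx => hS.matched x hSx hx
  simp [witness, h, hx]

theorem witness_add_witness_of_matched (hM : IsMatching I M) (h : M x = some y) :
    witness M S x + witness M S y = 0 := by
  simp only [witness, h, hM.symm h, Option.some.injEq, exists_eq_left']
  split_ifs <;> omega

theorem witness_add_witness_nonneg (hS : IsWitnessSet I M S) (hM : IsMatching I M)
    (h : InGM I M x y) (hne : M x ≠ some y) : 0 ≤ witness M S x + witness M S y := by
  by_cases hx : ∃ s, M x = some s ∧ S s
  · obtain ⟨s, hs, hSs⟩ := hx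
    have hy := hS.witness_eq_one (hS.closed s x y hSs (hM.symm hs) h hne)
    linarith [neg_one_le_witness (M := M) (S := S) (x := x)]
  by_cases hy : ∃ s, M y = some s ∧ S s
  · obtain ⟨s, hs, hSs⟩ := hy
    have hx' := hS.witness_eq_one
      (hS.closed s y x hSs (hM.symm hs) (h.symm hM) fun h' => hne (hM.symm h'))
    linarith [neg_one_le_witness (M := M) (S := S) (x := y)]
  linarith [witness_nonneg_of_not_partner hx, witness_nonneg_of_not_partner hy]

theorem sum_witness_nonpos [DecidableEq α] (hS : IsWitnessSet I M S) (hM : IsMatching I M) :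
    ∑ x ∈ I.W ∪ I.F, witness M S x ≤ 0 := by
  have h := Finset.sum_nonneg_of_involution (s := I.W ∪ I.F) (f := fun x => -witness M S x)
    (fun x => (M x).getD x) ?_ ?_ ?_
  · simpa using h
  all_goals intro x hx; rcases hMx : M x with _ | y
  · simpa using hx
  · simpa using hM.mem hMx
  · simp [hMx]
  · simp [hM.symm hMx]
  · simp [hS.witness_eq_zero_of_none hMx]
  · simp only [Option.getD_some]
    linarith [witness_add_witness_of_matched (S := S) hM hMx]

theorem vote_add_witness_nonneg (hS : IsWitnessSet I M S) (hM : IsMatching I M)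
    (hadj : I.adj x y) :
    0 ≤ (voteO I x (M x) (some y) + witness M S x) +
      (voteO I y (M y) (some x) + witness M S y) := by
  by_cases hxy : M x = some y
  · rw [hxy, hM.symm hxy, voteO_self, voteO_self]
    linarith [witness_add_witness_of_matched (S := S) hM hxy]
  have hyx : M y ≠ some x := fun h' => hxy (hM.symm h')
  by_cases hbx : Better I x (some y) (M x) <;> by_cases hby : Better I y (some x) (M y)
  · have hmm : MinusMinus I M x y := ⟨hadj, hxy, hbx, hby⟩
    rw [voteO_of_better hbx, voteO_of_better hby,
      hS.witness_eq_one (hS.minusMinus y x (hmm.symm hM)),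
      hS.witness_eq_one (hS.minusMinus x y hmm)]
    norm_num
  · rw [voteO_of_better hbx, voteO_eq_one_of_not_better hM (I.adj_symm x y hadj) hyx hby]
    linarith [hS.witness_add_witness_nonneg hM ⟨hadj, Or.inr (Or.inl hbx)⟩ hxy]
  · rw [voteO_eq_one_of_not_better hM hadj hxy hbx, voteO_of_better hby]
    linarith [hS.witness_add_witness_nonneg hM ⟨hadj, Or.inr (Or.inr hby)⟩ hxy]
  · rw [voteO_eq_one_of_not_better hM hadj hxy hbx,
      voteO_eq_one_of_not_better hM (I.adj_symm x y hadj) hyx hby]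
    linarith [neg_one_le_witness (M := M) (S := S) (x := x),
      neg_one_le_witness (M := M) (S := S) (x := y)]

theorem vote_none_add_witness_nonneg (hS : IsWitnessSet I M S) :
    0 ≤ voteO I x (M x) none + witness M S x := by
  rcases hMx : M x with _ | z
  · simp [voteO_self, hS.witness_eq_zero_of_none hMx]
  · rw [voteO_some_none]
    linarith [neg_one_le_witness (M := M) (S := S) (x := x)]

theorem popular [DecidableEq α] (hS : IsWitnessSet I M S) (hM : IsMatching I M) :
    Popular I M := by
  intro M' hM'
  have hsum := Finset.sum_nonneg_of_involution (s := I.W ∪ I.F)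
    (f := fun x => voteO I x (M x) (M' x) + witness M S x) (fun x => (M' x).getD x) ?_ ?_ ?_
  · rw [Finset.sum_add_distrib] at hsum
    unfold margin
    linarith [hS.sum_witness_nonpos hM]
  all_goals intro x hx; rcases hMx : M' x with _ | y
  · simpa using hx
  · simpa using hM'.mem hMx
  · simp [hMx]
  · simp [hM'.symm hMx]
  · simp only [Option.getD_none, hMx]
    linarith [hS.vote_none_add_witness_nonneg (x := x)]
  · simp only [Option.getD_some, hM'.symm hMx]
    exact hS.vote_add_witness_nonneg hM (hM'.adj hMx)

end IsWitnessSet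

end Witness

section MinusReach

variable {α : Type*} {I : MatP α} {M : α → Option α}

-- The structures (i), (ii) and (iii) of the theorem.
def ExistsMinusAltCycle (I : MatP α) (M : α → Option α) : Prop :=
  ∃ (n : ℕ) (v : ℕ → α), IsAltCycle I M n v ∧ ∃ i, i < n ∧ MinusMinus I M (v i) (v (i+1))

def ExistsMinusAltPathFromUnmatched (I : MatP α) (M : α → Option α) : Prop :=
  ∃ (n : ℕ) (v : ℕ → α), IsAltPath I M n v ∧ M (v 0) = none ∧
    ∃ i, i < n ∧ MinusMinus I M (v i) (v (i+1))

def ExistsAltPathBetweenMinusMinus (I : MatP α) (M : α → Option α) : Prop :=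
  ∃ (n : ℕ) (v : ℕ → α), IsAltPath I M n v ∧ 2 ≤ n ∧
    MinusMinus I M (v 0) (v 1) ∧ MinusMinus I M (v (n-1)) (v n)

structure IsMinusPath (I : MatP α) (M : α → Option α) (n : ℕ) (v : ℕ → α) : Prop
    extends IsOddAltPath I M n v where
  minusMinus : MinusMinus I M (v 0) (v 1)

/-- The vertices reached from a `(−,−)` edge by an alternating path ending in a non-matching
edge. -/
def MinusReach (I : MatP α) (M : α → Option α) (x : α) : Prop :=
  ∃ n v, IsMinusPath I M n v ∧ v n = x

namespace IsMinusPath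

variable {n : ℕ} {v : ℕ → α}

theorem take (h : IsMinusPath I M n v) {m : ℕ} (hm : Odd m) (hmn : m ≤ n) :
    IsMinusPath I M m v :=
  ⟨h.toIsOddAltPath.take hm hmn, h.minusMinus⟩

theorem existsMinusAltPathFromUnmatched (hM : IsMatching I M) (h : IsMinusPath I M n v)
    (hv : M (v n) = none) : ExistsMinusAltPathFromUnmatched I M := by
  have hn := h.odd.pos
  refine ⟨n, _, (h.reverse hM).isAltPath, by simpa using hv, n - 1, by omega, ?_⟩
  simpa [Nat.sub_sub_self hn, Nat.sub_add_cancel hn] using h.minusMinus.symm hM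

theorem existsMinusAltCycle (hM : IsMatching I M) (h : IsMinusPath I M n v)
    (hv : M (v n) = some (v 0)) : ExistsMinusAltCycle I M := by
  refine ⟨n + 1, _, h.isAltCycle hM hv, 0, by omega, ?_⟩
  simpa [show 1 ≤ n from h.odd.pos] using h.minusMinus

theorem partner_last_not_mem (hM : IsMatching I M) (hA : ¬ ExistsMinusAltCycle I M)
    (h : IsMinusPath I M n v) {a : α} (ha : M (v n) = some a) : ∀ i ≤ n, v i ≠ a := by
  rintro i hi rfl
  obtain rfl := h.eq_zero_of_matched_last hM hi (hM.symm ha)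
  exact hA (h.existsMinusAltCycle hM ha)

theorem existsAltPathBetweenMinusMinus {p q : ℕ} {P Q : ℕ → α} (hM : IsMatching I M)
    (hP : IsMinusPath I M p P) (hQ : IsMinusPath I M q Q) (hPQ : M (P p) = some (Q q))
    (hdisj : ∀ i ≤ p, ∀ j ≤ q, P i ≠ Q j) : ExistsAltPathBetweenMinusMinus I M := by
  have hp := hP.odd.pos
  have hq := hQ.odd.pos
  have hW := hP.append hM (hQ.reverse hM) (by simpa using hPQ)
    fun i hi j hj => hdisj i hi _ (Nat.sub_le q j)
  refine ⟨p + 1 + q, _, hW.isAltPath, by omega, ?_, ?_⟩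
  · rw [seqAppend_of_le (Nat.zero_le _), seqAppend_of_le hp]
    exact hP.minusMinus
  · rw [seqAppend_of_lt (by omega), seqAppend_of_lt (by omega),
      show q - (p + 1 + q - 1 - (p + 1)) = 1 by omega, show q - (p + 1 + q - (p + 1)) = 0 by omega]
    exact hQ.minusMinus.symm hM

/-- `Q` leaves `P` for the last time at `Q b = P 0`: the tail of `Q` after `b`, reversed, then `P`,
then the matching edge back to the end of `Q`, form an alternating cycle. -/
theorem existsMinusAltCycle_of_meet {p q b : ℕ} {P Q : ℕ → α} (hM : IsMatching I M)
    (hP : IsMinusPath I M p P) (hQ : IsMinusPath I M q Q) (hPQ : M (P p) = some (Q q))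
    (hb : Odd b) (hbq : b < q) (hQP : Q b = P 0)
    (hdisj : ∀ j, b < j → j ≤ q → ¬ ∃ i ≤ p, Q j = P i) : ExistsMinusAltCycle I M := by
  have hp := hP.odd.pos
  have hq := Nat.odd_iff.mp hQ.odd
  have hb' := Nat.odd_iff.mp hb
  have hb1 : Even (b + 1) := Nat.even_add_one.mpr (Nat.not_even_iff_odd.mpr hb)
  set r := q - (b + 1) with hr
  set R : ℕ → α := fun j => Q (b + 1 + (r - j)) with hR
  have hRpath : IsOddAltPath I M r R := (hQ.shift hb1 (by omega)).reverse hM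
  have hRP : M (R r) = some (P 0) := by
    show M (Q (b + 1 + (r - r))) = some (P 0)
    rw [Nat.sub_self, Nat.add_zero, ← hQP, hQ.matched_of_even hM hb1 (by omega) (by omega),
      Nat.add_sub_cancel]
  have hW := hRpath.append hM hP.toIsOddAltPath hRP
    fun i _ j hj h => hdisj _ (by omega) (by omega) ⟨j, hj, h⟩
  have hclose : M (seqAppend R r P (r + 1 + p)) = some (seqAppend R r P 0) := by
    rw [seqAppend_of_lt (by omega), seqAppend_of_le (Nat.zero_le _), hR]
    simpa [show b + 1 + r = q by omega] using hPQ
  refine ⟨_, _, hW.isAltCycle hM hclose, r + 1, by omega, ?_⟩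
  simp only [show r + 1 ≤ r + 1 + p by omega, show r + 1 + 1 ≤ r + 1 + p by omega, if_true]
  rw [seqAppend_of_lt (by omega), seqAppend_of_lt (by omega), Nat.sub_self,
    show r + 1 + 1 - (r + 1) = 1 by omega]
  exact hP.minusMinus


/-- If the two paths are disjoint they join into a structure (iii). Otherwise let `Q b = P a` be
the last vertex of `Q` on `P`: the paths close up into a structure (i) when `a = 0` or `b = 0`,
and otherwise either `b` was not the last meeting point or both paths can be cut short there. -/
theorem not_matched_ends (hM : IsMatching I M) (hA : ¬ ExistsMinusAltCycle I M)
    (hC : ¬ ExistsAltPathBetweenMinusMinus I M) {p q : ℕ} {P Q : ℕ → α}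
    (hP : IsMinusPath I M p P) (hQ : IsMinusPath I M q Q) : M (P p) ≠ some (Q q) := by
  intro hPQ
  by_cases hmeet : ∃ j ≤ q, ∃ i ≤ p, Q j = P i
  swap
  · push Not at hmeet
    exact hC (hP.existsAltPathBetweenMinusMinus hM hQ hPQ
      fun i hi j hj h => hmeet j hj i hi h.symm)
  obtain ⟨b, hbq, ⟨a, hap, hba⟩, hlast⟩ := Nat.exists_greatest_le_of_exists hmeet
  have hbq' : b < q := lt_of_le_of_ne hbq fun h =>
    hP.partner_last_not_mem hM hA hPQ a hap (by rw [← hba, h])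
  have hap' : a < p := lt_of_le_of_ne hap fun h =>
    hQ.partner_last_not_mem hM hA (hM.symm hPQ) b hbq (by rw [hba, h])
  have hpar := hP.even_iff_not_even_of_eq hQ.toIsOddAltPath (hM.adj hPQ) hap hbq hba.symm
  by_cases hb : Even b
  · have ha : Odd a := Nat.not_even_iff_odd.mp (fun h => hpar.mp h hb)
    by_cases hb0 : b = 0
    · refine hA (hQ.existsMinusAltCycle_of_meet hM hP (hM.symm hPQ) ha hap'
        (by rw [← hba, hb0]) fun j haj hjp ⟨i, hiq, h⟩ => ?_)
      rcases Nat.eq_zero_or_pos i with rfl | hi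
      · have := hP.injOn j a hjp hap (by rw [h, ← hb0, hba])
        omega
      · exact hlast i (by omega) hiq ⟨j, hjp, h.symm⟩
    · have hQb := hQ.matched_of_even hM hb (Nat.pos_of_ne_zero hb0) hbq
      rw [hba] at hQb
      exact not_matched_ends hM hA hC (hP.take ha hap)
        (hQ.take (Nat.Even.sub_odd (by omega) hb odd_one) (by omega)) hQb
  · have ha : Even a := hpar.mpr hb
    by_cases ha0 : a = 0
    · exact hA (hP.existsMinusAltCycle_of_meet hM hQ hPQ (Nat.not_even_iff_odd.mp hb) hbq'
        (by rw [hba, ha0]) hlast)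
    · have hPa := hP.matched_of_even hM ha (Nat.pos_of_ne_zero ha0) hap
      rw [← hba, hQ.matched_of_odd (Nat.not_even_iff_odd.mp hb) hbq', Option.some.injEq] at hPa
      exact hlast (b + 1) (by omega) (by omega) ⟨a - 1, by omega, hPa⟩
termination_by p + q

end IsMinusPath

namespace MinusReach

variable {x y : α}

theorem of_minusMinus (h : MinusMinus I M x y) : MinusReach I M y :=
  ⟨1, _, ⟨isOddAltPath_pair h.inGM h.2.1, by simpa using h⟩, rfl⟩

theorem matched (hM : IsMatching I M) (hB : ¬ ExistsMinusAltPathFromUnmatched I M)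
    (h : MinusReach I M x) : M x ≠ none := by
  obtain ⟨n, v, hv, rfl⟩ := h
  exact fun hn => hB (hv.existsMinusAltPathFromUnmatched hM hn)

theorem not_partner (hM : IsMatching I M) (hA : ¬ ExistsMinusAltCycle I M)
    (hC : ¬ ExistsAltPathBetweenMinusMinus I M) (hx : MinusReach I M x) (hxy : M x = some y) :
    ¬ MinusReach I M y := by
  obtain ⟨p, P, hP, rfl⟩ := hx
  rintro ⟨q, Q, hQ, rfl⟩
  exact hP.not_matched_ends hM hA hC hQ hxy

theorem closed (hM : IsMatching I M) (hA : ¬ ExistsMinusAltCycle I M) {s a b : α}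
    (hs : MinusReach I M s) (hsa : M s = some a) (hab : InGM I M a b) (hne : M a ≠ some b) :
    MinusReach I M b := by
  obtain ⟨p, P, hP, rfl⟩ := hs
  have hp := Nat.odd_iff.mp hP.odd
  have hpair := isOddAltPath_pair hab hne
  by_cases hb : ∃ j ≤ p, P j = b
  · obtain ⟨j, hj, rfl⟩ := hb
    have hbPa := (hpair.reverse hM).even_iff_not_even_of_eq hP.toIsOddAltPath
      (I.adj_symm _ _ (hM.adj hsa)) (Nat.zero_le 1) hj (by simp)
    exact ⟨j, P, hP.take (Nat.not_even_iff_odd.mp (hbPa.mp (Nat.even_iff.mpr rfl))) hj, rfl⟩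
  push Not at hb
  have ha := hP.partner_last_not_mem hM hA hsa
  refine ⟨p + 1 + 1, _, ⟨hP.append hM hpair (by simpa using hsa) fun i hi j hj => ?_, ?_⟩, ?_⟩
  · rcases Nat.le_one_iff_eq_zero_or_eq_one.mp hj with rfl | rfl
    · simpa using ha i hi
    · simpa using hb i hi
  · rw [seqAppend_of_le (Nat.zero_le _), seqAppend_of_le (by omega)]
    exact hP.minusMinus
  · rw [seqAppend_of_lt (by omega)]
    simp

end MinusReach

theorem isWitnessSet_minusReach (hM : IsMatching I M) (hA : ¬ ExistsMinusAltCycle I M)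
    (hB : ¬ ExistsMinusAltPathFromUnmatched I M) (hC : ¬ ExistsAltPathBetweenMinusMinus I M) :
    IsWitnessSet I M (MinusReach I M) :=
  ⟨fun _ hx => hx.matched hM hB, fun _ _ hx hxy => hx.not_partner hM hA hC hxy,
    fun _ _ h => MinusReach.of_minusMinus h,
    fun _ _ _ hs hsa hab hne => hs.closed hM hA hsa hab hne⟩

end MinusReach

/-- Huang–Kavitha characterization: a matching `M` is popular iff the subgraph
`G_M` (obtained by deleting all `(+,+)` edges) contains (i) no alternating cycle
with a `(−,−)` edge, (ii) no alternating path starting from an `M`-unmatched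
vertex containing a `(−,−)` edge, and (iii) no alternating path both of whose
end edges are `(−,−)` edges. -/
theorem popular_iff_huang_kavitha {α : Type*} [DecidableEq α]
    (I : MatP α) (M : α → Option α) (hM : IsMatching I M) :
    Popular I M ↔
      ((¬ ∃ (n : ℕ) (v : ℕ → α), IsAltCycle I M n v ∧
          ∃ i, i < n ∧ MinusMinus I M (v i) (v (i+1))) ∧
       (¬ ∃ (n : ℕ) (v : ℕ → α), IsAltPath I M n v ∧ M (v 0) = none ∧
          ∃ i, i < n ∧ MinusMinus I M (v i) (v (i+1))) ∧
       (¬ ∃ (n : ℕ) (v : ℕ → α), IsAltPath I M n v ∧ 2 ≤ n ∧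
          MinusMinus I M (v 0) (v 1) ∧ MinusMinus I M (v (n-1)) (v n))) := by
  refine ⟨fun hpop => ⟨?_, ?_, ?_⟩,
    fun ⟨hA, hB, hC⟩ => (isWitnessSet_minusReach hM hA hB hC).popular hM⟩
  · rintro ⟨n, v, hv, i, hi, hmm⟩
    exact hv.not_popular hM hi hmm hpop
  · rintro ⟨n, v, hv, h0, i, hi, hmm⟩
    exact hv.not_popular_of_unmatched_start hM h0 hi hmm hpop
  · rintro ⟨n, v, hv, hn, h0, hmm⟩
    exact hv.not_popular_of_minusMinus_ends hM hn h0 hmm hpop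
end
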